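/- Boundary observability estimate: Let V, P be real-valued C² functions on [0,L]×[0,T] satisfying ρV_tt − αV_xx + γβP_xx = 0 and μP_tt − βP_xx + γβV_xx = 0. Define I(x,t) = ρV_t(x,t)² + α₁V_x(x,t)² + μP_t(x,t)² + β(γV_x − P_x)(x,t)² and E₁(t) = ∫₀ᴸ I(x,t) dx, and assume E₁(t) ≤ E₁(0) for every t ∈ [0,T]. Then, with M = 2·max{ρ, (1+2γ²)/α₁, μ, 2/β}, one has ∫₀ᵀ I(L,t) dt ≤ (T/L + 2M)·E₁(0). -/

import Mathlib

open Real MeasureTheory intervalIntegral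


/-- Partial derivative in time of a function `V : ℝ → ℝ → ℝ` (first argument: space,
second argument: time). -/
noncomputable def partialT (V : ℝ → ℝ → ℝ) (x t : ℝ) : ℝ := deriv (fun s => V x s) t

/-- Second partial derivative in time. -/
noncomputable def partialTT (V : ℝ → ℝ → ℝ) (x t : ℝ) : ℝ := deriv (fun s => partialT V x s) t

/-- Partial derivative in space. -/
noncomputable def partialX (V : ℝ → ℝ → ℝ) (x t : ℝ) : ℝ := deriv (fun y => V y t) x

/-- Second partial derivative in space. -/
noncomputable def partialXX (V : ℝ → ℝ → ℝ) (x t : ℝ) : ℝ := deriv (fun y => partialX V y t) x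

/-- The pointwise energy density of the piezoelectric system. -/
noncomputable def densityI (ρ μ β α₁ γ : ℝ) (V P : ℝ → ℝ → ℝ) (x t : ℝ) : ℝ :=
  ρ * partialT V x t ^ 2 + α₁ * partialX V x t ^ 2 + μ * partialT P x t ^ 2
    + β * (γ * partialX V x t - partialX P x t) ^ 2

/-- The (first-order) energy over the interval `[0, L]`. -/
noncomputable def energyE₁ (ρ μ β α₁ γ L : ℝ) (V P : ℝ → ℝ → ℝ) (t : ℝ) : ℝ :=
  ∫ x in (0:ℝ)..L, densityI ρ μ β α₁ γ V P x t


section helpers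
variable {V : ℝ → ℝ → ℝ} (hV : ContDiff ℝ 2 (fun p : ℝ × ℝ => V p.1 p.2))
include hV

/-- second fderiv abbreviation -/
noncomputable def sndD (V : ℝ → ℝ → ℝ) (x t : ℝ) : (ℝ × ℝ) →L[ℝ] (ℝ × ℝ) →L[ℝ] ℝ :=
  fderiv ℝ (fderiv ℝ (fun p : ℝ × ℝ => V p.1 p.2)) (x, t)

lemma hasDerivAt_slice_x (x t : ℝ) :
    HasDerivAt (fun y => V y t) (fderiv ℝ (fun p : ℝ × ℝ => V p.1 p.2) (x, t) (1, 0)) x := by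
  have h1 : HasFDerivAt (fun p : ℝ × ℝ => V p.1 p.2)
      (fderiv ℝ (fun p : ℝ × ℝ => V p.1 p.2) (x, t)) (x, t) :=
    ((hV.differentiable (by norm_num)) (x, t)).hasFDerivAt
  have h2 : HasDerivAt (fun y : ℝ => (y, t)) ((1 : ℝ), (0 : ℝ)) x :=
    HasDerivAt.prodMk (hasDerivAt_id x) (hasDerivAt_const x t)
  exact h1.comp_hasDerivAt x h2

lemma hasDerivAt_slice_t (x t : ℝ) :
    HasDerivAt (fun s => V x s) (fderiv ℝ (fun p : ℝ × ℝ => V p.1 p.2) (x, t) (0, 1)) t := by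
  have h1 : HasFDerivAt (fun p : ℝ × ℝ => V p.1 p.2)
      (fderiv ℝ (fun p : ℝ × ℝ => V p.1 p.2) (x, t)) (x, t) :=
    ((hV.differentiable (by norm_num)) (x, t)).hasFDerivAt
  have h2 : HasDerivAt (fun s : ℝ => (x, s)) ((0 : ℝ), (1 : ℝ)) t :=
    HasDerivAt.prodMk (hasDerivAt_const t x) (hasDerivAt_id t)
  exact h1.comp_hasDerivAt t h2

lemma partialX_eq (x t : ℝ) :
    partialX V x t = fderiv ℝ (fun p : ℝ × ℝ => V p.1 p.2) (x, t) (1, 0) :=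
  (hasDerivAt_slice_x hV x t).deriv

lemma partialT_eq (x t : ℝ) :
    partialT V x t = fderiv ℝ (fun p : ℝ × ℝ => V p.1 p.2) (x, t) (0, 1) :=
  (hasDerivAt_slice_t hV x t).deriv

lemma contDiff_fderiv : ContDiff ℝ 1 (fderiv ℝ (fun p : ℝ × ℝ => V p.1 p.2)) :=
  hV.fderiv_right (by norm_num)

lemma contDiff_partialX : ContDiff ℝ 1 (fun p : ℝ × ℝ => partialX V p.1 p.2) := by
  have : (fun p : ℝ × ℝ => partialX V p.1 p.2)
      = fun p : ℝ × ℝ => fderiv ℝ (fun q : ℝ × ℝ => V q.1 q.2) p ((1 : ℝ), (0 : ℝ)) := by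
    funext p; exact partialX_eq hV p.1 p.2
  rw [this]
  exact (contDiff_fderiv hV).clm_apply contDiff_const

lemma contDiff_partialT : ContDiff ℝ 1 (fun p : ℝ × ℝ => partialT V p.1 p.2) := by
  have : (fun p : ℝ × ℝ => partialT V p.1 p.2)
      = fun p : ℝ × ℝ => fderiv ℝ (fun q : ℝ × ℝ => V q.1 q.2) p ((0 : ℝ), (1 : ℝ)) := by
    funext p; exact partialT_eq hV p.1 p.2
  rw [this]
  exact (contDiff_fderiv hV).clm_apply contDiff_const

lemma hasFDerivAt_fderiv (x t : ℝ) :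
    HasFDerivAt (fderiv ℝ (fun p : ℝ × ℝ => V p.1 p.2)) (sndD V x t) (x, t) :=
  (((contDiff_fderiv hV).differentiable one_ne_zero) (x, t)).hasFDerivAt

lemma hasDerivAt_fderiv_dir_x (v : ℝ × ℝ) (x t : ℝ) :
    HasDerivAt (fun y => fderiv ℝ (fun p : ℝ × ℝ => V p.1 p.2) (y, t) v)
      (sndD V x t (1, 0) v) x := by
  have h2 : HasDerivAt (fun y : ℝ => (y, t)) ((1 : ℝ), (0 : ℝ)) x :=
    HasDerivAt.prodMk (hasDerivAt_id x) (hasDerivAt_const x t)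
  have h1 := (hasFDerivAt_fderiv hV x t).comp_hasDerivAt x h2
  have h := h1.clm_apply (hasDerivAt_const x v)
  simpa using h

lemma hasDerivAt_fderiv_dir_t (v : ℝ × ℝ) (x t : ℝ) :
    HasDerivAt (fun s => fderiv ℝ (fun p : ℝ × ℝ => V p.1 p.2) (x, s) v)
      (sndD V x t (0, 1) v) t := by
  have h2 : HasDerivAt (fun s : ℝ => (x, s)) ((0 : ℝ), (1 : ℝ)) t :=
    HasDerivAt.prodMk (hasDerivAt_const t x) (hasDerivAt_id t)
  have h := ((hasFDerivAt_fderiv hV x t).comp_hasDerivAt t h2).clm_apply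
    (hasDerivAt_const t v)
  simpa using h

lemma sndD_symm (x t : ℝ) (v w : ℝ × ℝ) : sndD V x t v w = sndD V x t w v :=
  second_derivative_symmetric
    (fun p => ((hV.differentiable (by norm_num)) p).hasFDerivAt)
    (hasFDerivAt_fderiv hV x t) v w

lemma hasDerivAt_partialX_x (x t : ℝ) :
    HasDerivAt (fun y => partialX V y t) (partialXX V x t) x := by
  have h : HasDerivAt (fun y => partialX V y t) (sndD V x t (1, 0) (1, 0)) x := by
    have : (fun y => partialX V y t)
        = fun y => fderiv ℝ (fun p : ℝ × ℝ => V p.1 p.2) (y, t) ((1 : ℝ), (0 : ℝ)) := by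
      funext y; exact partialX_eq hV y t
    rw [this]; exact hasDerivAt_fderiv_dir_x hV _ x t
  have hx : partialXX V x t = sndD V x t (1, 0) (1, 0) := h.deriv
  rw [hx]; exact h

lemma partialXX_eq (x t : ℝ) : partialXX V x t = sndD V x t (1, 0) (1, 0) := by
  have : (fun y => partialX V y t)
      = fun y => fderiv ℝ (fun p : ℝ × ℝ => V p.1 p.2) (y, t) ((1 : ℝ), (0 : ℝ)) := by
    funext y; exact partialX_eq hV y t
  exact (this ▸ hasDerivAt_fderiv_dir_x hV _ x t :
    HasDerivAt (fun y => partialX V y t) _ x).deriv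

lemma hasDerivAt_partialT_t (x t : ℝ) :
    HasDerivAt (fun s => partialT V x s) (partialTT V x t) t := by
  have h : HasDerivAt (fun s => partialT V x s) (sndD V x t (0, 1) (0, 1)) t := by
    have : (fun s => partialT V x s)
        = fun s => fderiv ℝ (fun p : ℝ × ℝ => V p.1 p.2) (x, s) ((0 : ℝ), (1 : ℝ)) := by
      funext s; exact partialT_eq hV x s
    rw [this]; exact hasDerivAt_fderiv_dir_t hV _ x t
  have hx : partialTT V x t = sndD V x t (0, 1) (0, 1) := h.deriv
  rw [hx]; exact h

lemma partialTT_eq (x t : ℝ) : partialTT V x t = sndD V x t (0, 1) (0, 1) :=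
  (hasDerivAt_partialT_t hV x t).deriv.symm.trans (by
    have : (fun s => partialT V x s)
        = fun s => fderiv ℝ (fun p : ℝ × ℝ => V p.1 p.2) (x, s) ((0 : ℝ), (1 : ℝ)) := by
      funext s; exact partialT_eq hV x s
    exact (this ▸ hasDerivAt_fderiv_dir_t hV _ x t :
      HasDerivAt (fun s => partialT V x s) _ t).deriv)

/-- mixed partial -/
noncomputable def pmix (V : ℝ → ℝ → ℝ) (x t : ℝ) : ℝ := sndD V x t (1, 0) (0, 1)

lemma hasDerivAt_partialT_x (x t : ℝ) :
    HasDerivAt (fun y => partialT V y t) (pmix V x t) x := by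
  have : (fun y => partialT V y t)
      = fun y => fderiv ℝ (fun p : ℝ × ℝ => V p.1 p.2) (y, t) ((0 : ℝ), (1 : ℝ)) := by
    funext y; exact partialT_eq hV y t
  rw [this]; exact hasDerivAt_fderiv_dir_x hV _ x t

lemma hasDerivAt_partialX_t (x t : ℝ) :
    HasDerivAt (fun s => partialX V x s) (pmix V x t) t := by
  have : (fun s => partialX V x s)
      = fun s => fderiv ℝ (fun p : ℝ × ℝ => V p.1 p.2) (x, s) ((1 : ℝ), (0 : ℝ)) := by
    funext s; exact partialX_eq hV x s
  rw [this]
  have h := hasDerivAt_fderiv_dir_t hV ((1 : ℝ), (0 : ℝ)) x t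
  have hs : sndD V x t (0, 1) (1, 0) = pmix V x t := (sndD_symm hV x t _ _)
  rw [hs] at h; exact h

lemma continuous_sndD : Continuous (fun p : ℝ × ℝ => sndD V p.1 p.2) := by
  have h : Continuous (fderiv ℝ (fderiv ℝ (fun p : ℝ × ℝ => V p.1 p.2))) :=
    (contDiff_fderiv hV).continuous_fderiv one_ne_zero
  exact h.comp (continuous_id.fst.prodMk continuous_id.snd) |>.congr (fun p => rfl)

lemma continuous_pmix : Continuous (fun p : ℝ × ℝ => pmix V p.1 p.2) := by
  exact ((continuous_sndD hV).clm_apply continuous_const).clm_apply continuous_const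

lemma continuous_partialXX : Continuous (fun p : ℝ × ℝ => partialXX V p.1 p.2) := by
  have : (fun p : ℝ × ℝ => partialXX V p.1 p.2)
      = fun p : ℝ × ℝ => sndD V p.1 p.2 (1, 0) (1, 0) := by
    funext p; exact partialXX_eq hV p.1 p.2
  rw [this]
  exact ((continuous_sndD hV).clm_apply continuous_const).clm_apply continuous_const

lemma continuous_partialTT : Continuous (fun p : ℝ × ℝ => partialTT V p.1 p.2) := by
  have : (fun p : ℝ × ℝ => partialTT V p.1 p.2)
      = fun p : ℝ × ℝ => sndD V p.1 p.2 (0, 1) (0, 1) := by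
    funext p; exact partialTT_eq hV p.1 p.2
  rw [this]
  exact ((continuous_sndD hV).clm_apply continuous_const).clm_apply continuous_const

end helpers


noncomputable def Gfun (ρ μ : ℝ) (V P : ℝ → ℝ → ℝ) (x t : ℝ) : ℝ :=
  ρ * (partialT V x t * partialX V x t) + μ * (partialT P x t * partialX P x t)

noncomputable def DtG (ρ μ : ℝ) (V P : ℝ → ℝ → ℝ) (x t : ℝ) : ℝ :=
  ρ * (partialTT V x t * partialX V x t + partialT V x t * pmix V x t)
    + μ * (partialTT P x t * partialX P x t + partialT P x t * pmix P x t)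

noncomputable def DxI (ρ μ β α₁ γ : ℝ) (V P : ℝ → ℝ → ℝ) (x t : ℝ) : ℝ :=
  ρ * (2 * partialT V x t * pmix V x t) + α₁ * (2 * partialX V x t * partialXX V x t)
    + μ * (2 * partialT P x t * pmix P x t)
    + β * (2 * (γ * partialX V x t - partialX P x t)
        * (γ * partialXX V x t - partialXX P x t))

section middle
variable {V P : ℝ → ℝ → ℝ} (hV : ContDiff ℝ 2 (fun p : ℝ × ℝ => V p.1 p.2))
  (hP : ContDiff ℝ 2 (fun p : ℝ × ℝ => P p.1 p.2))
variable (ρ μ β α₁ γ : ℝ)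
include hV hP

lemma hasDerivAt_G_t (x t : ℝ) :
    HasDerivAt (fun s => Gfun ρ μ V P x s) (DtG ρ μ V P x t) t := by
  have h1 := ((hasDerivAt_partialT_t hV x t).mul (hasDerivAt_partialX_t hV x t)).const_mul ρ
  have h2 := ((hasDerivAt_partialT_t hP x t).mul (hasDerivAt_partialX_t hP x t)).const_mul μ
  exact h1.add h2

lemma hasDerivAt_I_x (x t : ℝ) :
    HasDerivAt (fun y => densityI ρ μ β α₁ γ V P y t) (DxI ρ μ β α₁ γ V P x t) x := by
  have h1 := ((hasDerivAt_partialT_x hV x t).pow 2).const_mul ρ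
  have h2 := ((hasDerivAt_partialX_x hV x t).pow 2).const_mul α₁
  have h3 := ((hasDerivAt_partialT_x hP x t).pow 2).const_mul μ
  have h4 := ((((hasDerivAt_partialX_x hV x t).const_mul γ).sub
      (hasDerivAt_partialX_x hP x t)).pow 2).const_mul β
  have h := ((h1.add h2).add h3).add h4
  refine HasDerivAt.congr_deriv h ?_
  unfold DxI
  push_cast
  simp only [Pi.sub_apply]
  ring

lemma continuous_uncurry_I :
    Continuous (fun p : ℝ × ℝ => densityI ρ μ β α₁ γ V P p.1 p.2) := by
  have c1 := (contDiff_partialT hV).continuous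
  have c2 := (contDiff_partialX hV).continuous
  have c3 := (contDiff_partialT hP).continuous
  have c4 := (contDiff_partialX hP).continuous
  unfold densityI
  fun_prop

lemma continuous_uncurry_G :
    Continuous (fun p : ℝ × ℝ => Gfun ρ μ V P p.1 p.2) := by
  have c1 := (contDiff_partialT hV).continuous
  have c2 := (contDiff_partialX hV).continuous
  have c3 := (contDiff_partialT hP).continuous
  have c4 := (contDiff_partialX hP).continuous
  unfold Gfun
  fun_prop

lemma continuous_uncurry_DtG :
    Continuous (fun p : ℝ × ℝ => DtG ρ μ V P p.1 p.2) := by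
  have c1 := (contDiff_partialT hV).continuous
  have c2 := (contDiff_partialX hV).continuous
  have c3 := (contDiff_partialT hP).continuous
  have c4 := (contDiff_partialX hP).continuous
  have c5 := continuous_partialTT hV
  have c6 := continuous_partialTT hP
  have c7 := continuous_pmix hV
  have c8 := continuous_pmix hP
  unfold DtG
  fun_prop

lemma continuous_uncurry_DxI :
    Continuous (fun p : ℝ × ℝ => DxI ρ μ β α₁ γ V P p.1 p.2) := by
  have c1 := (contDiff_partialT hV).continuous
  have c2 := (contDiff_partialX hV).continuous
  have c3 := (contDiff_partialT hP).continuous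
  have c4 := (contDiff_partialX hP).continuous
  have c5 := continuous_partialXX hV
  have c6 := continuous_partialXX hP
  have c7 := continuous_pmix hV
  have c8 := continuous_pmix hP
  unfold DxI
  fun_prop

end middle


/-- Fubini for continuous functions on a rectangle. -/
lemma swap_integrals {H : ℝ → ℝ → ℝ} (hH : Continuous (fun p : ℝ × ℝ => H p.1 p.2))
    {L T : ℝ} (hL : 0 ≤ L) (hT : 0 ≤ T) :
    ∫ t in (0:ℝ)..T, (∫ x in (0:ℝ)..L, H x t) = ∫ x in (0:ℝ)..L, ∫ t in (0:ℝ)..T, H x t := by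
  simp only [intervalIntegral.integral_of_le hL, intervalIntegral.integral_of_le hT]
  apply MeasureTheory.integral_integral_swap (f := fun t x => H x t)
  have hmeas : (volume.restrict (Set.Ioc (0:ℝ) T)).prod (volume.restrict (Set.Ioc (0:ℝ) L))
      = (volume : Measure (ℝ × ℝ)).restrict ((Set.Ioc (0:ℝ) T) ×ˢ (Set.Ioc (0:ℝ) L)) := by
    rw [Measure.prod_restrict, ← Measure.volume_eq_prod]
  rw [Measure.volume_eq_prod] at hmeas
  rw [hmeas]
  have hc : Continuous (Function.uncurry (fun t x => H x t)) := by
    have : Function.uncurry (fun t x => H x t)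
        = (fun p : ℝ × ℝ => H p.1 p.2) ∘ Prod.swap := rfl
    rw [this]
    exact hH.comp continuous_swap
  have : IntegrableOn (Function.uncurry (fun t x => H x t))
      ((Set.Icc (0:ℝ) T) ×ˢ (Set.Icc (0:ℝ) L)) volume :=
    hc.continuousOn.integrableOn_compact (isCompact_Icc.prod isCompact_Icc)
  exact this.mono_set (Set.prod_mono Set.Ioc_subset_Icc_self Set.Ioc_subset_Icc_self)

set_option maxHeartbeats 1000000 in
/-- The pointwise identity from the PDEs. -/
lemma DxI_eq_two_DtG {ρ μ β α₁ γ α : ℝ} (hα : α = α₁ + γ ^ 2 * β)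
    {V P : ℝ → ℝ → ℝ} {x t : ℝ}
    (h1 : ρ * partialTT V x t - α * partialXX V x t + γ * β * partialXX P x t = 0)
    (h2 : μ * partialTT P x t - β * partialXX P x t + γ * β * partialXX V x t = 0) :
    DxI ρ μ β α₁ γ V P x t = 2 * DtG ρ μ V P x t := by
  subst hα
  unfold DxI DtG
  linear_combination (-2 * partialX V x t) * h1 + (-2 * partialX P x t) * h2

/-- Purely algebraic part of the multiplier bound. -/
lemma g_bound_alg {ρ μ β α₁ γ C a b c d : ℝ}
    (hρ : 0 < ρ) (hμ : 0 < μ) (hβ : 0 < β) (hα₁ : 0 < α₁)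
    (hCρ : ρ ≤ C) (hCμ : μ ≤ C) (hCa' : (1 + 2 * γ ^ 2) / α₁ ≤ C) (hCb' : 2 / β ≤ C) :
    2 * |ρ * (a * b) + μ * (c * d)|
      ≤ C * (ρ * a ^ 2 + α₁ * b ^ 2 + μ * c ^ 2 + β * (γ * b - d) ^ 2) := by
  have hC0 : 0 < C := lt_of_lt_of_le hρ hCρ
  have hCa : 1 + 2 * γ ^ 2 ≤ C * α₁ := (div_le_iff₀ hα₁).mp hCa'
  have hCb : 2 ≤ C * β := (div_le_iff₀ hβ).mp hCb'
  have e1 : ρ + 2 * μ * γ ^ 2 ≤ C ^ 2 * α₁ := by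
    nlinarith [mul_nonneg hC0.le (sub_nonneg.mpr hCa),
      mul_nonneg (sub_nonneg.mpr hCμ) (sq_nonneg γ)]
  have e2 : 2 * μ ≤ C ^ 2 * β := by
    nlinarith [mul_nonneg hC0.le (sub_nonneg.mpr hCb)]
  have e3 : d ^ 2 ≤ 2 * γ ^ 2 * b ^ 2 + 2 * (γ * b - d) ^ 2 := by
    nlinarith [sq_nonneg (γ * b + (γ * b - d))]
  have h3 : ρ * b ^ 2 + μ * d ^ 2 ≤ C ^ 2 * α₁ * b ^ 2 + C ^ 2 * β * (γ * b - d) ^ 2 := by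
    nlinarith [mul_nonneg (sub_nonneg.mpr e1) (sq_nonneg b),
      mul_nonneg (sub_nonneg.mpr e2) (sq_nonneg (γ * b - d)),
      mul_nonneg hμ.le (sub_nonneg.mpr e3)]
  have hplus : 2 * C * (ρ * (a * b) + μ * (c * d))
      ≤ C ^ 2 * (ρ * a ^ 2 + α₁ * b ^ 2 + μ * c ^ 2 + β * (γ * b - d) ^ 2) := by
    nlinarith [mul_nonneg hρ.le (sq_nonneg (C * a - b)),
      mul_nonneg hμ.le (sq_nonneg (C * c - d)), h3]
  have hminus : -(C ^ 2 * (ρ * a ^ 2 + α₁ * b ^ 2 + μ * c ^ 2 + β * (γ * b - d) ^ 2))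
      ≤ 2 * C * (ρ * (a * b) + μ * (c * d)) := by
    nlinarith [mul_nonneg hρ.le (sq_nonneg (C * a + b)),
      mul_nonneg hμ.le (sq_nonneg (C * c + d)), h3]
  have habs2 : 2 * C * |ρ * (a * b) + μ * (c * d)|
      ≤ C ^ 2 * (ρ * a ^ 2 + α₁ * b ^ 2 + μ * c ^ 2 + β * (γ * b - d) ^ 2) := by
    have h2C : (0:ℝ) < 2 * C := by positivity
    calc 2 * C * |ρ * (a * b) + μ * (c * d)| = |2 * C * (ρ * (a * b) + μ * (c * d))| := by
          rw [abs_mul, abs_of_pos h2C]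
      _ ≤ _ := by
          rw [abs_le]
          exact ⟨hminus, hplus⟩
  nlinarith [habs2, hC0, abs_nonneg (ρ * (a * b) + μ * (c * d))]

/-- The pointwise bound on the multiplier term. -/
lemma G_bound {ρ μ β α₁ γ : ℝ} (hρ : 0 < ρ) (hμ : 0 < μ) (hβ : 0 < β) (hα₁ : 0 < α₁)
    {C : ℝ} (hC : C = max (max ρ ((1 + 2 * γ ^ 2) / α₁)) (max μ (2 / β)))
    (V P : ℝ → ℝ → ℝ) (x t : ℝ) :
    2 * |Gfun ρ μ V P x t| ≤ C * densityI ρ μ β α₁ γ V P x t := by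
  have hCρ : ρ ≤ C := hC ▸ le_max_of_le_left (le_max_left _ _)
  have hCμ : μ ≤ C := hC ▸ le_max_of_le_right (le_max_left _ _)
  have hCa' : (1 + 2 * γ ^ 2) / α₁ ≤ C := hC ▸ le_max_of_le_left (le_max_right _ _)
  have hCb' : 2 / β ≤ C := hC ▸ le_max_of_le_right (le_max_right _ _)
  exact g_bound_alg hρ hμ hβ hα₁ hCρ hCμ hCa' hCb'


set_option maxHeartbeats 1000000 in
/-- Boundary observability estimate: if the energy `E₁` is non-increasing from its
initial value, then the boundary trace of the energy density at `x = L` is controlled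
by `(T/L + 2M) E₁(0)`, with `M = 2 max{ρ, (1+2γ²)/α₁, μ, 2/β}`. -/
theorem boundary_observability_estimate
    (ρ μ β L T γ α₁ α : ℝ)
    (hρ : 0 < ρ) (hμ : 0 < μ) (hβ : 0 < β) (hL : 0 < L) (hT : 0 < T) (hα₁ : 0 < α₁)
    (hα : α = α₁ + γ ^ 2 * β)
    (V P : ℝ → ℝ → ℝ)
    (hV : ContDiff ℝ 2 (fun p : ℝ × ℝ => V p.1 p.2))
    (hP : ContDiff ℝ 2 (fun p : ℝ × ℝ => P p.1 p.2))
    (heq1 : ∀ x ∈ Set.Icc (0:ℝ) L, ∀ t ∈ Set.Icc (0:ℝ) T,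
      ρ * partialTT V x t - α * partialXX V x t + γ * β * partialXX P x t = 0)
    (heq2 : ∀ x ∈ Set.Icc (0:ℝ) L, ∀ t ∈ Set.Icc (0:ℝ) T,
      μ * partialTT P x t - β * partialXX P x t + γ * β * partialXX V x t = 0)
    (hdec : ∀ t ∈ Set.Icc (0:ℝ) T,
      energyE₁ ρ μ β α₁ γ L V P t ≤ energyE₁ ρ μ β α₁ γ L V P 0)
    (M : ℝ) (hM : M = 2 * max (max ρ ((1 + 2 * γ ^ 2) / α₁)) (max μ (2 / β))) :
    (∫ t in (0:ℝ)..T, densityI ρ μ β α₁ γ V P L t)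
      ≤ (T / L + 2 * M) * energyE₁ ρ μ β α₁ γ L V P 0 := by
  set C : ℝ := max (max ρ ((1 + 2 * γ ^ 2) / α₁)) (max μ (2 / β)) with hCdef
  have hC0 : 0 < C := lt_of_lt_of_le hρ (le_max_of_le_left (le_max_left _ _))
  -- continuity facts
  have cI : Continuous (fun p : ℝ × ℝ => densityI ρ μ β α₁ γ V P p.1 p.2) :=
    continuous_uncurry_I hV hP ρ μ β α₁ γ
  have cG : Continuous (fun p : ℝ × ℝ => Gfun ρ μ V P p.1 p.2) :=
    continuous_uncurry_G hV hP ρ μ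
  have cDtG : Continuous (fun p : ℝ × ℝ => DtG ρ μ V P p.1 p.2) :=
    continuous_uncurry_DtG hV hP ρ μ
  have cDxI : Continuous (fun p : ℝ × ℝ => DxI ρ μ β α₁ γ V P p.1 p.2) :=
    continuous_uncurry_DxI hV hP ρ μ β α₁ γ
  have sliceX : ∀ (F2 : ℝ × ℝ → ℝ), Continuous F2 → ∀ t : ℝ,
      Continuous (fun x : ℝ => F2 (x, t)) :=
    fun F2 h t => h.comp (continuous_id.prodMk continuous_const)
  have sliceT : ∀ (F2 : ℝ × ℝ → ℝ), Continuous F2 → ∀ x : ℝ,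
      Continuous (fun t : ℝ => F2 (x, t)) :=
    fun F2 h x => h.comp (continuous_const.prodMk continuous_id)
  -- Step A : ∫₀ᴸ x·DxI dx = L·I(L,t) - E(t)
  have stepA : ∀ t : ℝ, (∫ x in (0:ℝ)..L, x * DxI ρ μ β α₁ γ V P x t)
      = L * densityI ρ μ β α₁ γ V P L t - energyE₁ ρ μ β α₁ γ L V P t := by
    intro t
    have hderiv : ∀ x ∈ Set.uIcc (0:ℝ) L,
        HasDerivAt (fun y => y * densityI ρ μ β α₁ γ V P y t)
          (densityI ρ μ β α₁ γ V P x t + x * DxI ρ μ β α₁ γ V P x t) x := by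
      intro x _
      have h := (hasDerivAt_id' x).mul (hasDerivAt_I_x hV hP ρ μ β α₁ γ x t)
      refine h.congr_deriv ?_; ring
    have c1 : Continuous (fun x => densityI ρ μ β α₁ γ V P x t) := sliceX _ cI t
    have c2 : Continuous (fun x => x * DxI ρ μ β α₁ γ V P x t) :=
      continuous_id.mul (sliceX _ cDxI t)
    have hftc := intervalIntegral.integral_eq_sub_of_hasDerivAt hderiv
      ((c1.add c2).intervalIntegrable 0 L)
    have hsplit : (∫ x in (0:ℝ)..L,
        (densityI ρ μ β α₁ γ V P x t + x * DxI ρ μ β α₁ γ V P x t))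
        = (∫ x in (0:ℝ)..L, densityI ρ μ β α₁ γ V P x t)
          + ∫ x in (0:ℝ)..L, x * DxI ρ μ β α₁ γ V P x t :=
      intervalIntegral.integral_add (c1.intervalIntegrable 0 L) (c2.intervalIntegrable 0 L)
    rw [hsplit] at hftc
    unfold energyE₁
    simp only [zero_mul] at hftc
    linarith [hftc]
  -- Step B : L·∫₀ᵀ I(L,t) dt = ∫₀ᵀ E + ∫₀ᵀ J
  have intE : IntervalIntegrable (fun t => energyE₁ ρ μ β α₁ γ L V P t) volume 0 T := by
    apply Continuous.intervalIntegrable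
    apply intervalIntegral.continuous_parametric_intervalIntegral_of_continuous'
      (f := fun t x => densityI ρ μ β α₁ γ V P x t)
    exact cI.comp continuous_swap
  have intJ : IntervalIntegrable (fun t => ∫ x in (0:ℝ)..L, x * DxI ρ μ β α₁ γ V P x t)
      volume 0 T := by
    apply Continuous.intervalIntegrable
    apply intervalIntegral.continuous_parametric_intervalIntegral_of_continuous'
      (f := fun t x => x * DxI ρ μ β α₁ γ V P x t)
    exact (continuous_snd.mul (cDxI.comp continuous_swap) : _)
  have stepB : L * (∫ t in (0:ℝ)..T, densityI ρ μ β α₁ γ V P L t)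
      = (∫ t in (0:ℝ)..T, energyE₁ ρ μ β α₁ γ L V P t)
        + ∫ t in (0:ℝ)..T, (∫ x in (0:ℝ)..L, x * DxI ρ μ β α₁ γ V P x t) := by
    rw [← intervalIntegral.integral_const_mul, ← intervalIntegral.integral_add intE intJ]
    apply intervalIntegral.integral_congr
    intro t _
    simp only [stepA t]; ring
  -- Step C/D : ∫₀ᵀ J = ∫₀ᴸ 2x(G(x,T) - G(x,0)) dx
  have stepCD : (∫ t in (0:ℝ)..T, (∫ x in (0:ℝ)..L, x * DxI ρ μ β α₁ γ V P x t))
      = ∫ x in (0:ℝ)..L, 2 * x * (Gfun ρ μ V P x T - Gfun ρ μ V P x 0) := by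
    rw [swap_integrals (H := fun x t => x * DxI ρ μ β α₁ γ V P x t)
      (continuous_fst.mul cDxI) hL.le hT.le]
    apply intervalIntegral.integral_congr
    intro x hx
    rw [Set.uIcc_of_le hL.le] at hx
    show (∫ t in (0:ℝ)..T, x * DxI ρ μ β α₁ γ V P x t)
      = 2 * x * (Gfun ρ μ V P x T - Gfun ρ μ V P x 0)
    have h1 : (∫ t in (0:ℝ)..T, x * DxI ρ μ β α₁ γ V P x t)
        = ∫ t in (0:ℝ)..T, (2 * x) * DtG ρ μ V P x t := by
      apply intervalIntegral.integral_congr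
      intro t ht
      rw [Set.uIcc_of_le hT.le] at ht
      show x * DxI ρ μ β α₁ γ V P x t = 2 * x * DtG ρ μ V P x t
      rw [DxI_eq_two_DtG hα (heq1 x hx t ht) (heq2 x hx t ht)]; ring
    rw [h1, intervalIntegral.integral_const_mul,
      intervalIntegral.integral_eq_sub_of_hasDerivAt
        (fun t _ => hasDerivAt_G_t hV hP ρ μ x t)
        ((sliceT _ cDtG x).intervalIntegrable 0 T)]
  -- Step E : bound the boundary term
  have Inn : ∀ x t : ℝ, 0 ≤ densityI ρ μ β α₁ γ V P x t := by
    intro x t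
    unfold densityI
    have := sq_nonneg (partialT V x t); have := sq_nonneg (partialX V x t)
    have := sq_nonneg (partialT P x t)
    have := sq_nonneg (γ * partialX V x t - partialX P x t)
    nlinarith [hρ.le, hμ.le, hβ.le, hα₁.le, mul_nonneg hρ.le (sq_nonneg (partialT V x t)),
      mul_nonneg hα₁.le (sq_nonneg (partialX V x t)),
      mul_nonneg hμ.le (sq_nonneg (partialT P x t)),
      mul_nonneg hβ.le (sq_nonneg (γ * partialX V x t - partialX P x t))]
  have stepE : (∫ x in (0:ℝ)..L, 2 * x * (Gfun ρ μ V P x T - Gfun ρ μ V P x 0))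
      ≤ L * C * (energyE₁ ρ μ β α₁ γ L V P T + energyE₁ ρ μ β α₁ γ L V P 0) := by
    have hpt : ∀ x ∈ Set.Icc (0:ℝ) L,
        2 * x * (Gfun ρ μ V P x T - Gfun ρ μ V P x 0)
          ≤ L * C * (densityI ρ μ β α₁ γ V P x T + densityI ρ μ β α₁ γ V P x 0) := by
      intro x hx
      have gb1 := G_bound hρ hμ hβ hα₁ hCdef V P x T
      have gb2 := G_bound hρ hμ hβ hα₁ hCdef V P x 0
      have k1 : 2 * (Gfun ρ μ V P x T - Gfun ρ μ V P x 0)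
          ≤ C * densityI ρ μ β α₁ γ V P x T + C * densityI ρ μ β α₁ γ V P x 0 := by
        nlinarith [le_abs_self (Gfun ρ μ V P x T), neg_abs_le (Gfun ρ μ V P x 0)]
      have k2 : (0:ℝ) ≤ C * densityI ρ μ β α₁ γ V P x T
          + C * densityI ρ μ β α₁ γ V P x 0 := by
        nlinarith [abs_nonneg (Gfun ρ μ V P x T), abs_nonneg (Gfun ρ μ V P x 0)]
      nlinarith [mul_le_mul_of_nonneg_left k1 hx.1, mul_le_mul_of_nonneg_right hx.2 k2]
    have cLHS : Continuous (fun x => 2 * x * (Gfun ρ μ V P x T - Gfun ρ μ V P x 0)) :=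
      (continuous_const.mul continuous_id).mul ((sliceX _ cG T).sub (sliceX _ cG 0))
    have cRHS : Continuous (fun x =>
        L * C * (densityI ρ μ β α₁ γ V P x T + densityI ρ μ β α₁ γ V P x 0)) :=
      continuous_const.mul ((sliceX _ cI T).add (sliceX _ cI 0))
    have hmono := intervalIntegral.integral_mono_on hL.le
      (cLHS.intervalIntegrable 0 L : IntervalIntegrable _ volume 0 L)
      (cRHS.intervalIntegrable 0 L : IntervalIntegrable _ volume 0 L) hpt
    have heval : (∫ x in (0:ℝ)..L,
        L * C * (densityI ρ μ β α₁ γ V P x T + densityI ρ μ β α₁ γ V P x 0))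
        = L * C * (energyE₁ ρ μ β α₁ γ L V P T + energyE₁ ρ μ β α₁ γ L V P 0) := by
      rw [intervalIntegral.integral_const_mul,
        intervalIntegral.integral_add ((sliceX _ cI T).intervalIntegrable 0 L)
          ((sliceX _ cI 0).intervalIntegrable 0 L)]
      rfl
    rw [heval] at hmono
    exact hmono
  -- energy facts
  have E0nn : 0 ≤ energyE₁ ρ μ β α₁ γ L V P 0 :=
    intervalIntegral.integral_nonneg hL.le (fun x _ => Inn x 0)
  have ET : energyE₁ ρ μ β α₁ γ L V P T ≤ energyE₁ ρ μ β α₁ γ L V P 0 :=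
    hdec T ⟨hT.le, le_refl T⟩
  have EB : (∫ t in (0:ℝ)..T, energyE₁ ρ μ β α₁ γ L V P t)
      ≤ T * energyE₁ ρ μ β α₁ γ L V P 0 := by
    have := intervalIntegral.integral_mono_on hT.le intE
      (_root_.intervalIntegrable_const (c := energyE₁ ρ μ β α₁ γ L V P 0)) hdec
    simpa [smul_eq_mul] using this
  -- conclusion
  have key : L * (∫ t in (0:ℝ)..T, densityI ρ μ β α₁ γ V P L t)
      ≤ T * energyE₁ ρ μ β α₁ γ L V P 0 + 2 * L * C * energyE₁ ρ μ β α₁ γ L V P 0 := by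
    rw [stepB, stepCD]
    nlinarith [stepE, EB, mul_le_mul_of_nonneg_left ET (mul_nonneg hL.le hC0.le),
      mul_nonneg (mul_nonneg hL.le hC0.le) E0nn]
  rw [← mul_le_mul_iff_right₀ hL]
  have hexp : L * ((T / L + 2 * M) * energyE₁ ρ μ β α₁ γ L V P 0)
      = T * energyE₁ ρ μ β α₁ γ L V P 0 + 2 * L * M * energyE₁ ρ μ β α₁ γ L V P 0 := by
    field_simp
  rw [hexp, hM]
  nlinarith [key, mul_nonneg (mul_nonneg hL.le hC0.le) E0nn]
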